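/- Let R be a commutative ring, let D : R → R be a derivation (an additive map satisfying D(xy) = x·D(y) + D(x)·y), and let L, K, Q be n×n matrices over R. Extend D entrywise to matrices. If D(L) = LK − KL and D(Q) = QK − KQ − L, then for every integer m ≥ 0, D(Tr(Q·L^m)) = −Tr(L^{m+1}). -/

import Mathlib

/-!
Applying a derivation `d` entrywise to matrices obeys the Leibniz rule and commutes with the
trace. If `d L = [L, K]` then by induction `d (L ^ m) = [L ^ m, K]`, so
`d (Q L^m) = Q [L^m, K] + ([Q, K] - L) L^m = [Q L^m, K] - L^(m+1)`, and the commutator is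
traceless.
-/

open Matrix

namespace Derivation

variable {S A : Type*} [CommSemiring S]

section CommSemiring

variable [CommSemiring A] [Algebra S A] (d : Derivation S A A)
  {l m o : Type*} [Fintype m]

theorem matrix_map_mul (P : Matrix l m A) (N : Matrix m o A) :
    (P * N).map d = P * N.map d + P.map d * N := by
  ext i j
  simp only [Matrix.map_apply, Matrix.mul_apply, Matrix.add_apply, map_sum, leibniz, smul_eq_mul,
    ← Finset.sum_add_distrib]
  exact Finset.sum_congr rfl fun k _ => by ring

end CommSemiring

variable [CommRing A] [Algebra S A] (d : Derivation S A A)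
  {m : Type*} [Fintype m] [DecidableEq m]

theorem matrix_map_pow_of_map_eq_commutator {L K : Matrix m m A}
    (hL : L.map d = L * K - K * L) (k : ℕ) :
    (L ^ k).map d = L ^ k * K - K * L ^ k := by
  induction k with
  | zero =>
    ext i j
    simp [one_apply, apply_ite d]
  | succ k ih =>
    rw [pow_succ, matrix_map_mul, ih, hL]
    noncomm_ring

end Derivation

theorem stmt7 (R : Type*) [CommRing R] (D : R → R)
    (hD_add : ∀ x y : R, D (x + y) = D x + D y)
    (hD_mul : ∀ x y : R, D (x * y) = x * D y + D x * y)
    (n : ℕ) (L K Q : Matrix (Fin n) (Fin n) R)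
    (hL : L.map D = L * K - K * L)
    (hQ : Q.map D = Q * K - K * Q - L) :
    ∀ m : ℕ, D ((Q * L ^ m).trace) = -(L ^ (m + 1)).trace := by
  let d : Derivation ℤ R R := Derivation.mk' (AddMonoidHom.mk' D hD_add).toIntLinearMap
    fun a b => by simpa [mul_comm] using hD_mul a b
  change L.map d = _ at hL
  change Q.map d = _ at hQ
  intro m
  have hQLm : (Q * L ^ m).map d = Q * L ^ m * K - K * (Q * L ^ m) - L ^ (m + 1) := by
    rw [d.matrix_map_mul, d.matrix_map_pow_of_map_eq_commutator hL, hQ, pow_succ']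
    noncomm_ring
  change d _ = _
  rw [AddMonoidHom.map_trace d, hQLm, trace_sub, trace_sub, trace_mul_comm K]
  abel
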